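/- Let x₀ = 3 − 2√2 and suppose y is a twice-differentiable real function near x₀ with y(x₀) = x₀, y′(x₀) = −1, satisfying Ψ₂(x, y(x)) = 0 identically with Ψ₂(X,Y) = Y³ + (2X − X²)Y² + (−X + 2X²)Y + X³. Then y″(x₀) = −16 − 25/√2. -/

import Mathlib

/-!
Differentiating `Ψ₂(x, y(x)) = 0` twice along the graph `γ(x) = (x, y(x))` gives the second-order
chain rule `D²Ψ₂(γ')(γ') + DΨ₂(γ'') = 0` with `γ' = (1, y')` and `γ'' = (0, y'')`. At
`x₀ = y(x₀) = 3 − 2√2`, `y'(x₀) = −1` this reads `(82 − 56√2) + (34√2 − 48) y''(x₀) = 0`, and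
rationalising `(28√2 − 41)/(17√2 − 24)` gives `−16 − 25/√2`.
-/

open Filter Topology ContinuousLinearMap

theorem hasDerivAt_graph {y : ℝ → ℝ} {y' x : ℝ} (hy : HasDerivAt y y' x) :
    HasDerivAt (fun t => (t, y t)) (1, y') x :=
  (hasDerivAt_id x).prodMk hy

section Implicit

variable {E : Type*} [NormedAddCommGroup E] [NormedSpace ℝ E]
  {F : ℝ × ℝ → E} {F' : ℝ × ℝ → ℝ × ℝ →L[ℝ] E} {F'' : ℝ × ℝ →L[ℝ] ℝ × ℝ →L[ℝ] E}
  {y : ℝ → ℝ} {x₀ : ℝ}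

theorem deriv_comp_graph_eventuallyEq
    (hy : ∀ᶠ x in 𝓝 x₀, DifferentiableAt ℝ y x)
    (hF : ∀ᶠ x in 𝓝 x₀, HasFDerivAt F (F' (x, y x)) (x, y x)) :
    deriv (fun x => F (x, y x)) =ᶠ[𝓝 x₀] fun x => F' (x, y x) (1, deriv y x) := by
  filter_upwards [hy, hF] with x hyx hFx
  exact (hFx.comp_hasDerivAt x (hasDerivAt_graph hyx.hasDerivAt)).deriv

theorem implicit_second_deriv_eq_zero
    (hy : ∀ᶠ x in 𝓝 x₀, DifferentiableAt ℝ y x)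
    (hy' : DifferentiableAt ℝ (deriv y) x₀)
    (hF : ∀ᶠ x in 𝓝 x₀, HasFDerivAt F (F' (x, y x)) (x, y x))
    (hF' : HasFDerivAt F' F'' (x₀, y x₀))
    (heq : ∀ᶠ x in 𝓝 x₀, F (x, y x) = 0) :
    F'' (1, deriv y x₀) (1, deriv y x₀) + F' (x₀, y x₀) (0, deriv (deriv y) x₀) = 0 := by
  have hfirst : (fun x => F' (x, y x) (1, deriv y x)) =ᶠ[𝓝 x₀] fun _ => 0 := by
    simpa using (deriv_comp_graph_eventuallyEq hy hF).symm.trans (EventuallyEq.deriv heq)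
  have hslope : HasDerivAt (fun x => F' (x, y x)) (F'' (1, deriv y x₀)) x₀ :=
    hF'.comp_hasDerivAt x₀ (hasDerivAt_graph hy.self_of_nhds.hasDerivAt)
  have htangent : HasDerivAt (fun x => ((1 : ℝ), deriv y x)) (0, deriv (deriv y) x₀) x₀ :=
    (hasDerivAt_const x₀ 1).prodMk hy'.hasDerivAt
  rw [← (hslope.clm_apply htangent).deriv, hfirst.deriv_eq, deriv_const]

end Implicit

def psi2 (p : ℝ × ℝ) : ℝ :=
  p.2 ^ 3 + (2 * p.1 - p.1 ^ 2) * p.2 ^ 2 + (-p.1 + 2 * p.1 ^ 2) * p.2 + p.1 ^ 3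

def psi2X (p : ℝ × ℝ) : ℝ := (2 - 2 * p.1) * p.2 ^ 2 + (-1 + 4 * p.1) * p.2 + 3 * p.1 ^ 2

def psi2Y (p : ℝ × ℝ) : ℝ := 3 * p.2 ^ 2 + 2 * (2 * p.1 - p.1 ^ 2) * p.2 + (-p.1 + 2 * p.1 ^ 2)

def psi2XX (p : ℝ × ℝ) : ℝ := -2 * p.2 ^ 2 + 4 * p.2 + 6 * p.1

def psi2XY (p : ℝ × ℝ) : ℝ := 2 * (2 - 2 * p.1) * p.2 + (-1 + 4 * p.1)

def psi2YY (p : ℝ × ℝ) : ℝ := 6 * p.2 + 2 * (2 * p.1 - p.1 ^ 2)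

def psi2Deriv (p : ℝ × ℝ) : ℝ × ℝ →L[ℝ] ℝ := psi2X p • fst ℝ ℝ ℝ + psi2Y p • snd ℝ ℝ ℝ

section Psi2

variable (p : ℝ × ℝ)

theorem hasFDerivAt_psi2 : HasFDerivAt psi2 (psi2Deriv p) p := by
  have hX : HasFDerivAt (fun q : ℝ × ℝ => q.1) (fst ℝ ℝ ℝ) p := hasFDerivAt_fst
  have hY : HasFDerivAt (fun q : ℝ × ℝ => q.2) (snd ℝ ℝ ℝ) p := hasFDerivAt_snd
  have h : HasFDerivAt psi2 _ p := (((hY.pow 3).add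
    (((hX.const_mul (2 : ℝ)).sub (hX.pow 2)).mul (hY.pow 2))).add
    ((hX.neg.add ((hX.pow 2).const_mul (2 : ℝ))).mul hY)).add (hX.pow 3)
  refine h.congr_fderiv ?_
  ext <;> simp [psi2Deriv, psi2X, psi2Y] <;> ring

theorem hasFDerivAt_psi2X :
    HasFDerivAt psi2X (psi2XX p • fst ℝ ℝ ℝ + psi2XY p • snd ℝ ℝ ℝ) p := by
  have hX : HasFDerivAt (fun q : ℝ × ℝ => q.1) (fst ℝ ℝ ℝ) p := hasFDerivAt_fst
  have hY : HasFDerivAt (fun q : ℝ × ℝ => q.2) (snd ℝ ℝ ℝ) p := hasFDerivAt_snd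
  have h : HasFDerivAt psi2X _ p :=
    ((((hasFDerivAt_const (2 : ℝ) p).sub (hX.const_mul (2 : ℝ))).mul (hY.pow 2)).add
    (((hasFDerivAt_const (-1 : ℝ) p).add (hX.const_mul (4 : ℝ))).mul hY)).add
    ((hX.pow 2).const_mul (3 : ℝ))
  refine h.congr_fderiv ?_
  ext <;> simp [psi2XX, psi2XY] <;> ring

theorem hasFDerivAt_psi2Y :
    HasFDerivAt psi2Y (psi2XY p • fst ℝ ℝ ℝ + psi2YY p • snd ℝ ℝ ℝ) p := by
  have hX : HasFDerivAt (fun q : ℝ × ℝ => q.1) (fst ℝ ℝ ℝ) p := hasFDerivAt_fst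
  have hY : HasFDerivAt (fun q : ℝ × ℝ => q.2) (snd ℝ ℝ ℝ) p := hasFDerivAt_snd
  have h : HasFDerivAt psi2Y _ p := (((hY.pow 2).const_mul (3 : ℝ)).add
    ((((hX.const_mul (2 : ℝ)).sub (hX.pow 2)).const_mul (2 : ℝ)).mul hY)).add
    (hX.neg.add ((hX.pow 2).const_mul (2 : ℝ)))
  refine h.congr_fderiv ?_
  ext <;> simp [psi2XY, psi2YY] <;> ring

theorem hasFDerivAt_psi2Deriv :
    HasFDerivAt psi2Deriv
      ((psi2XX p • fst ℝ ℝ ℝ + psi2XY p • snd ℝ ℝ ℝ).smulRight (fst ℝ ℝ ℝ) +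
        (psi2XY p • fst ℝ ℝ ℝ + psi2YY p • snd ℝ ℝ ℝ).smulRight (snd ℝ ℝ ℝ)) p :=
  ((hasFDerivAt_psi2X p).smul_const (fst ℝ ℝ ℝ)).add ((hasFDerivAt_psi2Y p).smul_const (snd ℝ ℝ ℝ))

end Psi2

theorem psi2_implicit_second_deriv_relation {y : ℝ → ℝ} {x₀ : ℝ}
    (hy : ∀ᶠ x in 𝓝 x₀, DifferentiableAt ℝ y x)
    (hy' : DifferentiableAt ℝ (deriv y) x₀)
    (heq : ∀ᶠ x in 𝓝 x₀, psi2 (x, y x) = 0) :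
    psi2XX (x₀, y x₀) + 2 * psi2XY (x₀, y x₀) * deriv y x₀ + psi2YY (x₀, y x₀) * deriv y x₀ ^ 2
      + psi2Y (x₀, y x₀) * deriv (deriv y) x₀ = 0 := by
  have h := implicit_second_deriv_eq_zero hy hy' (.of_forall fun x => hasFDerivAt_psi2 (x, y x))
    (hasFDerivAt_psi2Deriv _) heq
  simp only [psi2Deriv, add_apply, smulRight_apply, smul_apply, coe_fst', coe_snd', smul_eq_mul] at h
  linear_combination h

theorem psi2Y_three_sub_two_sqrt_two :
    psi2Y (3 - 2 * √2, 3 - 2 * √2) = 34 * √2 - 48 := by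
  simp only [psi2Y]
  linear_combination (16 * √2 - 36) * Real.sq_sqrt zero_le_two

theorem psi2_hessian_three_sub_two_sqrt_two :
    psi2XX (3 - 2 * √2, 3 - 2 * √2) - 2 * psi2XY (3 - 2 * √2, 3 - 2 * √2)
      + psi2YY (3 - 2 * √2, 3 - 2 * √2) = 82 - 56 * √2 := by
  simp only [psi2XX, psi2XY, psi2YY]
  linear_combination 16 * Real.sq_sqrt zero_le_two

/-- Implicit second derivative of the level-2 modular equation for 39+39
at the fixed point x₀ = 3 − 2√2. -/
theorem psi2_implicit_second_deriv
    (x₀ : ℝ) (hx₀ : x₀ = 3 - 2 * Real.sqrt 2)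
    (y : ℝ → ℝ)
    (hy : ∀ᶠ x in nhds x₀, DifferentiableAt ℝ y x)
    (hy' : DifferentiableAt ℝ (deriv y) x₀)
    (hyx₀ : y x₀ = x₀) (hy'x₀ : deriv y x₀ = -1)
    (heq : ∀ᶠ x in nhds x₀,
      (y x) ^ 3 + (2 * x - x ^ 2) * (y x) ^ 2 + (-x + 2 * x ^ 2) * (y x) + x ^ 3 = 0) :
    deriv (deriv y) x₀ = -16 - 25 / Real.sqrt 2 := by
  have h := psi2_implicit_second_deriv_relation hy hy' heq
  rw [hyx₀, hy'x₀] at h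
  subst hx₀
  set e := deriv (deriv y) (3 - 2 * √2)
  have key : (34 * √2 - 48) * e + (82 - 56 * √2) = 0 := by
    rw [← psi2Y_three_sub_two_sqrt_two, ← psi2_hessian_three_sub_two_sqrt_two]
    linear_combination h
  have hs : √2 ^ 2 = 2 := Real.sq_sqrt zero_le_two
  have hhalf : 25 / √2 = 25 * √2 / 2 := by
    rw [div_eq_div_iff (by positivity) two_ne_zero]
    linear_combination -25 * hs
  rw [hhalf]
  -- multiply `key` by the conjugate: `(34√2 − 48)(34√2 + 48) = 8`
  linear_combination (34 * √2 + 48) / 8 * key + (238 - 289 * e / 2) * hs
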